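/- Consider n qubits, numbers λ_i ∈ [0,1) with W_i = (1/2)(1 + λ_i Z), reset dissipators D_i(ρ) = Tr_i(ρ) ⊗ W_i, weights q_i > 0 with ∑_i q_i = 1, E_0(ρ) = ∑_i q_i D_i(ρ), ρ_0 = ⊗_i W_i, and the super-operator K(ρ) := ρ − E_0(ρ) + Tr(ρ)·ρ_0. For a string α set q_α := ∑_{i ∈ supp(α)} q_i. Then K(Q_α) = q_α·Q_α for every α ≠ (0,…,0) and K(Q_{(0,…,0)}) = Q_{(0,…,0)}; consequently K is an invertible linear map on the space of n-qubit operators, its Hilbert–Schmidt adjoint K* is invertible, and (K*)⁻¹(Q̃_α) = (1/q_α)·Q̃_α for α ≠ (0,…,0) while (K*)⁻¹(Q̃_{(0,…,0)}) = Q̃_{(0,…,0)}. -/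

import Mathlib

/-!
Each reset `D_i` sends a tensor product `⊗ⱼ Aⱼ` to `Tr(A_i)` times the same product with its
`i`-th factor replaced by `W_i`. As `Tr W_i = 1` and `X/2, Y/2, Z/2` are traceless, `D_i` fixes
`Q_α` when `α_i = 0` and kills it otherwise; hence `E₀ Q_α = (1 - q_α) Q_α` and
`K Q_α = q_α Q_α + Tr(Q_α) ρ₀`. The families `Q_α` and `Q̃_α` are biorthogonal for
`(A, B) ↦ Tr(A B)`, so both are bases. `K` is diagonal with nonzero eigenvalues in the first, and
since these eigenvalues are real and the `Q̃_α` Hermitian, the adjoint relation makes `K*`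
diagonal with the same eigenvalues in the second.
-/

namespace SSP

noncomputable section

open Matrix
open scoped ComplexOrder

/-- Computational basis labels for `n` qubits. -/
abbrev Idx (n : ℕ) := Fin n → Fin 2

/-- Operators (matrices) on the Hilbert space of `n` qubits. -/
abbrev Op (n : ℕ) := Matrix (Idx n) (Idx n) ℂ

/-- Super-operators on `n` qubits. -/
abbrev SOp (n : ℕ) := Op n →ₗ[ℂ] Op n

/-- The operator norm (largest singular value) of a complex matrix. -/
noncomputable def opNorm {m : Type*} [Fintype m] [DecidableEq m]
    (M : Matrix m m ℂ) : ℝ :=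
  ‖Matrix.toEuclideanCLM (𝕜 := ℂ) M‖

/-- A density matrix: positive semidefinite with unit trace. -/
def IsDensity {n : ℕ} (ρ : Op n) : Prop := ρ.PosSemidef ∧ ρ.trace = 1

/-- An operator is supported on the set `S` of qubits if it has the form
`Ô_S ⊗ 1` on the remaining qubits. -/
def SupportedOn {n : ℕ} (S : Set (Fin n)) (M : Op n) : Prop :=
  (∀ x y : Idx n, (∃ i ∉ S, x i ≠ y i) → M x y = 0) ∧
  (∀ x y x' y' : Idx n,
      (∀ i ∈ S, x i = x' i) → (∀ i ∈ S, y i = y' i) →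
      (∀ i ∉ S, x i = y i) → (∀ i ∉ S, x' i = y' i) → M x y = M x' y')

/-- The support of an operator: the smallest set of qubits supporting it
(the intersection of all supporting sets). -/
def suppOp {n : ℕ} (M : Op n) : Set (Fin n) :=
  {i | ∀ S : Set (Fin n), SupportedOn S M → i ∈ S}

/-- `E` is a quantum channel (CPTP map) acting only on the qubits in `S`:
it has a Kraus representation whose Kraus operators are all supported on `S`. -/
def IsChannelOn {n : ℕ} (S : Set (Fin n)) (E : SOp n) : Prop :=
  ∃ (m : ℕ) (F : Fin m → Op n),
    (∀ j, SupportedOn S (F j)) ∧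
    (∑ j, (F j)ᴴ * F j = 1) ∧
    (∀ ρ, E ρ = ∑ j, F j * ρ * (F j)ᴴ)

/-- A quantum channel on the whole system. -/
def IsChannel {n : ℕ} (E : SOp n) : Prop := IsChannelOn Set.univ E

/-- `Estar` is the adjoint of `E` with respect to the Hilbert–Schmidt
inner product `⟨A,B⟩ = Tr(A†B)`. -/
def IsHSAdjoint {n : ℕ} (E Estar : SOp n) : Prop :=
  ∀ A B : Op n, ((Estar A)ᴴ * B).trace = (Aᴴ * (E B)).trace

/-- An ergodic channel: it has a unique fixed point among density matrices,
this fixed point is full rank (positive definite), and there is no other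
eigenvalue of modulus one. -/
def IsErgodic {n : ℕ} (E : SOp n) : Prop :=
  (∃ σ : Op n, IsDensity σ ∧ σ.PosDef ∧ E σ = σ ∧
      ∀ ρ : Op n, IsDensity ρ → E ρ = ρ → ρ = σ) ∧
  (∀ μ : ℂ, Module.End.HasEigenvalue (E : Module.End ℂ (Op n)) μ → μ = 1 ∨ ‖μ‖ < 1)

/-- The set of qubits (endpoints) of an edge. -/
def edgeQubits {n : ℕ} (e : Sym2 (Fin n)) : Set (Fin n) := {i | i ∈ e}

/-- Finset of endpoints of an edge. -/
def edgeFinset' {n : ℕ} (e : Sym2 (Fin n)) : Finset (Fin n) :=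
  Finset.univ.filter (· ∈ e)

/-- A Hamiltonian is geometrically `k`-local w.r.t. the graph `G`: it is a sum
of Hermitian terms, each supported on a connected subset of `G` with at most
`k` vertices. -/
def GeomLocal {n : ℕ} (G : SimpleGraph (Fin n)) (k : ℕ) (H : Op n) : Prop :=
  ∃ (m : ℕ) (h : Fin m → Op n) (S : Fin m → Set (Fin n)),
    H = ∑ j, h j ∧
    ∀ j, (h j).IsHermitian ∧ SupportedOn (S j) (h j) ∧
      (S j).ncard ≤ k ∧ (G.induce (S j)).Preconnected

/-- The ball of radius `k` around a set of vertices, in the graph metric. -/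
def Ball {n : ℕ} (G : SimpleGraph (Fin n)) (X : Set (Fin n)) (k : ℕ) :
    Set (Fin n) :=
  {v | ∃ u ∈ X, ∃ w : G.Walk u v, w.length ≤ k}

/- Pauli matrices and the Wauli bases. -/
def PX : Matrix (Fin 2) (Fin 2) ℂ := !![0, 1; 1, 0]
def PY : Matrix (Fin 2) (Fin 2) ℂ := !![0, -Complex.I; Complex.I, 0]
def PZ : Matrix (Fin 2) (Fin 2) ℂ := !![1, 0; 0, -1]

/-- `W = (1/2)(1 + λ Z)`. -/
noncomputable def Wmat (l : ℝ) : Matrix (Fin 2) (Fin 2) ℂ :=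
  (2⁻¹ : ℂ) • (1 + (l : ℂ) • PZ)

/-- Single-qubit Wauli basis `{W, X/2, Y/2, Z/2}`. -/
noncomputable def wauli (l : ℝ) : Fin 4 → Matrix (Fin 2) (Fin 2) ℂ :=
  ![Wmat l, (2⁻¹ : ℂ) • PX, (2⁻¹ : ℂ) • PY, (2⁻¹ : ℂ) • PZ]

/-- Single-qubit dual Wauli basis `{1, X, Y, Z - λ·1}`. -/
noncomputable def dualWauli (l : ℝ) : Fin 4 → Matrix (Fin 2) (Fin 2) ℂ :=
  ![1, PX, PY, PZ - (l : ℂ) • 1]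

/-- The `n`-qubit Wauli basis element `Q_α` (tensor product of the `Q_{α_i}`). -/
noncomputable def Qmat {n : ℕ} (lam : Fin n → ℝ) (α : Fin n → Fin 4) : Op n :=
  Matrix.of fun x y => ∏ i, wauli (lam i) (α i) (x i) (y i)

/-- The `n`-qubit dual Wauli basis element `Q̃_α`. -/
noncomputable def Qdual {n : ℕ} (lam : Fin n → ℝ) (α : Fin n → Fin 4) : Op n :=
  Matrix.of fun x y => ∏ i, dualWauli (lam i) (α i) (x i) (y i)

/-- The support of a Wauli string. -/
def suppStr {n : ℕ} (α : Fin n → Fin 4) : Finset (Fin n) :=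
  Finset.univ.filter (fun i => α i ≠ 0)

/-- The coefficient `c_α = Tr(Q_α O)` of the expansion `O = ∑_α c_α Q̃_α`
in the dual Wauli basis. -/
noncomputable def QCoeff {n : ℕ} (lam : Fin n → ℝ) (O : Op n)
    (α : Fin n → Fin 4) : ℂ :=
  (Qmat lam α * O).trace

/-- The `Q1` norm: the `ℓ¹` norm of the dual-Wauli coefficient vector. -/
noncomputable def Q1Norm {n : ℕ} (lam : Fin n → ℝ) (O : Op n) : ℝ :=
  ∑ α : Fin n → Fin 4, ‖QCoeff lam O α‖

/-- The subspace `S_k`: the span of the dual Wauli operators `Q̃_α` with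
`|α| ≤ k`. -/
def Sk {n : ℕ} (lam : Fin n → ℝ) (k : ℕ) : Submodule ℂ (Op n) :=
  Submodule.span ℂ {Q | ∃ α : Fin n → Fin 4, (suppStr α).card ≤ k ∧ Q = Qdual lam α}

/-- The trace norm `Tr √(O†O)` of a matrix. -/
noncomputable def traceNorm {m : Type*} [Fintype m] [DecidableEq m]
    (M : Matrix m m ℂ) : ℝ :=
  (((Matrix.isHermitian_conjTranspose_mul_self M).eigenvectorUnitary.1 *
      Matrix.diagonal (((↑) : ℝ → ℂ) ∘ (√·) ∘ (Matrix.isHermitian_conjTranspose_mul_self M).eigenvalues) *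
      (star (Matrix.isHermitian_conjTranspose_mul_self M).eigenvectorUnitary : Matrix m m ℂ)).trace).re

section Kronecker

variable {ι m R : Type*} [Fintype ι]

def piKron [CommMonoid R] (A : ι → Matrix m m R) : Matrix (ι → m) (ι → m) R :=
  of fun x y => ∏ i, A i (x i) (y i)

def resetAt [Fintype m] [DecidableEq ι] [Mul R] [AddCommMonoid R] (i : ι) (W : Matrix m m R)
    (ρ : Matrix (ι → m) (ι → m) R) : Matrix (ι → m) (ι → m) R :=
  of fun x y => (∑ b, ρ (Function.update x i b) (Function.update y i b)) * W (x i) (y i)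

variable [CommSemiring R]

theorem trace_piKron [Fintype m] [DecidableEq ι] (A : ι → Matrix m m R) :
    (piKron A).trace = ∏ i, (A i).trace :=
  (Fintype.prod_sum fun i j => A i j j).symm

theorem piKron_mul_piKron [Fintype m] [DecidableEq ι] (A B : ι → Matrix m m R) :
    piKron A * piKron B = piKron fun i => A i * B i := by
  ext x z
  simp only [piKron, mul_apply, of_apply, Fintype.prod_sum, Finset.prod_mul_distrib]

theorem conjTranspose_piKron [StarRing R] (A : ι → Matrix m m R) :
    (piKron A)ᴴ = piKron fun i => (A i)ᴴ := by
  ext x y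
  simp [piKron, star_prod]

theorem resetAt_piKron [Fintype m] [DecidableEq ι] (i : ι) (W : Matrix m m R)
    (A : ι → Matrix m m R) :
    resetAt i W (piKron A) = (A i).trace • piKron (Function.update A i W) := by
  ext x y
  have hsplit : ∀ (B : ι → Matrix m m R) (x' y' : ι → m),
      ∏ j, B j (x' j) (y' j) = B i (x' i) (y' i) * ∏ j ∈ {i}ᶜ, B j (x' j) (y' j) :=
    fun B x' y' => Fintype.prod_eq_mul_prod_compl i _
  have hoff : ∀ j ∈ ({i}ᶜ : Finset ι), ∀ (B : ι → Matrix m m R) (b : m),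
      B j (Function.update x i b j) (Function.update y i b j) = B j (x j) (y j) := by
    intro j hj B b
    rw [Finset.mem_compl, Finset.mem_singleton] at hj
    rw [Function.update_of_ne hj, Function.update_of_ne hj]
  have hupd : ∀ j ∈ ({i}ᶜ : Finset ι),
      Function.update A i W j (x j) (y j) = A j (x j) (y j) := by
    intro j hj
    rw [Finset.mem_compl, Finset.mem_singleton] at hj
    rw [Function.update_of_ne hj]
  simp only [resetAt, piKron, of_apply, Matrix.smul_apply, smul_eq_mul, hsplit,
    Function.update_self, Finset.prod_congr rfl fun j hj => hoff j hj A _,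
    Finset.prod_congr rfl hupd, ← Finset.sum_mul, trace, diag_apply]
  ring

end Kronecker

theorem ext_of_trace_conjTranspose_mul {m ι : Type*} [Fintype m]
    (b : Module.Basis ι ℂ (Matrix m m ℂ)) {A B : Matrix m m ℂ}
    (h : ∀ i, (Aᴴ * b i).trace = (Bᴴ * b i).trace) : A = B := by
  have hpair := b.ext (f₁ := traceLinearMap m ℂ ℂ ∘ₗ LinearMap.mulLeft ℂ Aᴴ)
    (f₂ := traceLinearMap m ℂ ℂ ∘ₗ LinearMap.mulLeft ℂ Bᴴ) h
  have hAB := LinearMap.congr_fun hpair (A - B)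
  simp only [LinearMap.comp_apply, LinearMap.mulLeft_apply, traceLinearMap_apply] at hAB
  rw [← sub_eq_zero, ← trace_conjTranspose_mul_self_eq_zero_iff, conjTranspose_sub,
    Matrix.sub_mul, trace_sub, hAB, sub_self]

theorem linearIndependent_of_trace_mul_eq_ite {ι m R : Type*} [Fintype ι] [DecidableEq ι]
    [Fintype m] [CommRing R] (u v : ι → Matrix m m R)
    (h : ∀ i j, (u i * v j).trace = if i = j then 1 else 0) : LinearIndependent R v := by
  rw [Fintype.linearIndependent_iff]
  intro g hg i
  simpa [Matrix.mul_sum, trace_sum, h] using congrArg (fun M => (u i * M).trace) hg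

theorem bijective_of_apply_basis_eq_smul {ι K V : Type*} [Field K] [AddCommGroup V]
    [Module K V] [FiniteDimensional K V] (b : Module.Basis ι K V) (f : V →ₗ[K] V)
    (c : ι → K) (hc : ∀ i, c i ≠ 0) (hf : ∀ i, f (b i) = c i • b i) :
    Function.Bijective f := by
  have hsurj : Function.Surjective f := by
    rw [← LinearMap.range_eq_top, eq_top_iff, ← b.span_eq, Submodule.span_le]
    rintro _ ⟨i, rfl⟩
    exact ⟨(c i)⁻¹ • b i, by rw [map_smul, hf, smul_smul, inv_mul_cancel₀ (hc i), one_smul]⟩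
  exact ⟨LinearMap.injective_iff_surjective.mpr hsurj, hsurj⟩

theorem Wmat_eq (l : ℝ) : Wmat l = !![((1 + l) / 2 : ℂ), 0; 0, (1 - l) / 2] := by
  ext i j; fin_cases i <;> fin_cases j <;> simp [Wmat, PZ] <;> ring

theorem trace_wauli (l : ℝ) (a : Fin 4) : (wauli l a).trace = if a = 0 then 1 else 0 := by
  fin_cases a
  · simp [wauli, Wmat_eq, trace_fin_two]
    ring
  all_goals simp [wauli, PX, PY, PZ, trace_fin_two]

theorem trace_dualWauli_mul_wauli (l : ℝ) (a b : Fin 4) :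
    (dualWauli l a * wauli l b).trace = if a = b then 1 else 0 := by
  fin_cases a <;> fin_cases b <;>
    simp [dualWauli, wauli, Wmat_eq, PX, PY, PZ, trace_fin_two, one_fin_two,
      mul_left_comm Complex.I] <;> ring

theorem conjTranspose_dualWauli (l : ℝ) (a : Fin 4) : (dualWauli l a)ᴴ = dualWauli l a := by
  fin_cases a <;> ext i j <;> fin_cases i <;> fin_cases j <;>
    simp [dualWauli, PX, PY, PZ]

section Wauli

variable {n : ℕ} (lam : Fin n → ℝ)

theorem Qmat_eq_piKron (α : Fin n → Fin 4) :
    Qmat lam α = piKron fun i => wauli (lam i) (α i) := rfl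

theorem Qdual_eq_piKron (α : Fin n → Fin 4) :
    Qdual lam α = piKron fun i => dualWauli (lam i) (α i) := rfl

theorem trace_Qmat (α : Fin n → Fin 4) : (Qmat lam α).trace = if α = 0 then 1 else 0 := by
  simp only [Qmat_eq_piKron, trace_piKron, trace_wauli, Finset.prod_boole]
  simp [funext_iff]

theorem trace_Qdual_mul_Qmat (β α : Fin n → Fin 4) :
    (Qdual lam β * Qmat lam α).trace = if β = α then 1 else 0 := by
  simp only [Qdual_eq_piKron, Qmat_eq_piKron, piKron_mul_piKron, trace_piKron,
    trace_dualWauli_mul_wauli, Finset.prod_boole]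
  simp [funext_iff]

theorem conjTranspose_Qdual (α : Fin n → Fin 4) : (Qdual lam α)ᴴ = Qdual lam α := by
  simp only [Qdual_eq_piKron, conjTranspose_piKron, conjTranspose_dualWauli]

theorem resetAt_Qmat (i : Fin n) (α : Fin n → Fin 4) :
    resetAt i (Wmat (lam i)) (Qmat lam α) = if α i = 0 then Qmat lam α else 0 := by
  rw [Qmat_eq_piKron, resetAt_piKron, trace_wauli]
  split_ifs with hα
  · rw [one_smul, Function.update_eq_self_iff.mpr (by rw [hα]; rfl)]
  · exact zero_smul _ _

theorem card_wauliString_eq_finrank :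
    Fintype.card (Fin n → Fin 4) = Module.finrank ℂ (Op n) := by
  simp [Module.finrank_matrix, ← mul_pow]

def qmatBasis : Module.Basis (Fin n → Fin 4) ℂ (Op n) :=
  basisOfLinearIndependentOfCardEqFinrank (ι := Fin n → Fin 4)
    (linearIndependent_of_trace_mul_eq_ite (Qdual lam) _ (trace_Qdual_mul_Qmat lam))
    card_wauliString_eq_finrank

def qdualBasis : Module.Basis (Fin n → Fin 4) ℂ (Op n) :=
  basisOfLinearIndependentOfCardEqFinrank (ι := Fin n → Fin 4)
    (linearIndependent_of_trace_mul_eq_ite (Qmat lam) (Qdual lam) fun α β => by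
      rw [trace_mul_comm, trace_Qdual_mul_Qmat]
      exact if_congr eq_comm rfl rfl)
    card_wauliString_eq_finrank

@[simp] theorem qmatBasis_apply (α : Fin n → Fin 4) : qmatBasis lam α = Qmat lam α := by
  rw [qmatBasis, coe_basisOfLinearIndependentOfCardEqFinrank]

@[simp] theorem qdualBasis_apply (α : Fin n → Fin 4) : qdualBasis lam α = Qdual lam α := by
  rw [qdualBasis, coe_basisOfLinearIndependentOfCardEqFinrank]

end Wauli

theorem IsHSAdjoint.apply_eq_smul_of_trace_mul_eq_ite {n : ℕ} {K Kstar : SOp n}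
    (hKs : IsHSAdjoint K Kstar) {ι : Type*} [DecidableEq ι] (v : Module.Basis ι ℂ (Op n))
    (u : ι → Op n) (huv : ∀ i j, (u i * v j).trace = if i = j then 1 else 0)
    (hu : ∀ i, (u i)ᴴ = u i) (c : ι → ℝ) (hKv : ∀ j, K (v j) = c j • v j) (i : ι) :
    Kstar (u i) = c i • u i := by
  refine ext_of_trace_conjTranspose_mul v fun j => ?_
  rw [hKs, hKv, conjTranspose_smul, hu, star_trivial, Matrix.mul_smul, Matrix.smul_mul,
    trace_smul, trace_smul, huv]
  split_ifs with h <;> simp [h]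

section KMap

variable {n : ℕ} (lam : Fin n → ℝ) (q : Fin n → ℝ)

def kMap (ρ : Op n) : Op n :=
  ρ - ∑ i, q i • resetAt i (Wmat (lam i)) ρ + ρ.trace • Qmat lam 0

def kEigenvalue (α : Fin n → Fin 4) : ℝ :=
  if α = 0 then 1 else ∑ i ∈ suppStr α, q i

variable {q}

theorem kEigenvalue_ne_zero (hq : ∀ i, 0 < q i) (α : Fin n → Fin 4) : kEigenvalue q α ≠ 0 := by
  unfold kEigenvalue
  split_ifs with hα
  · exact one_ne_zero
  · obtain ⟨i, hi⟩ := Function.ne_iff.mp hα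
    exact (Finset.sum_pos (fun i _ => hq i) ⟨i, by simpa [suppStr] using hi⟩).ne'

theorem sum_smul_resetAt_Qmat (hq : ∑ i, q i = 1) (α : Fin n → Fin 4) :
    ∑ i, q i • resetAt i (Wmat (lam i)) (Qmat lam α)
      = (1 - ∑ i ∈ suppStr α, q i) • Qmat lam α := by
  have hfixed : 1 - ∑ i ∈ suppStr α, q i = ∑ i with α i = 0, q i := by
    rw [← hq, ← Finset.sum_filter_add_sum_filter_not Finset.univ (fun i => α i = 0) q, suppStr,
      add_sub_cancel_right]
  rw [hfixed, Finset.sum_filter, Finset.sum_smul]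
  simp only [resetAt_Qmat, smul_ite, ite_smul, smul_zero, zero_smul]

theorem kMap_Qmat (hq : ∑ i, q i = 1) (α : Fin n → Fin 4) :
    kMap lam q (Qmat lam α) = kEigenvalue q α • Qmat lam α := by
  rw [kMap, sum_smul_resetAt_Qmat lam hq, trace_Qmat, kEigenvalue]
  split_ifs with hα
  · subst hα
    simp [suppStr]
  · rw [zero_smul, add_zero, sub_smul, one_smul, sub_sub_cancel]

end KMap

theorem K_diagonal_and_invertible_general {n : ℕ} (lam : Fin n → ℝ)
    (q : Fin n → ℝ) (hq0 : ∀ i, 0 < q i) (hqsum : ∑ i, q i = 1)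
    (D : Fin n → SOp n)
    (hD : ∀ i (ρ : Op n), D i ρ = Matrix.of fun x y =>
      (∑ b : Fin 2, ρ (Function.update x i b) (Function.update y i b)) *
        Wmat (lam i) (x i) (y i))
    (E0 : SOp n) (hE0 : ∀ ρ : Op n, E0 ρ = ∑ i, q i • D i ρ)
    (K : SOp n)
    (hK : ∀ ρ : Op n, K ρ = ρ - E0 ρ + ρ.trace • Qmat lam 0) :
    (∀ α : Fin n → Fin 4, α ≠ 0 →
        K (Qmat lam α) = (∑ i ∈ suppStr α, q i : ℝ) • Qmat lam α) ∧
    K (Qmat lam 0) = Qmat lam 0 ∧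
    Function.Bijective K ∧
    ∀ Kstar : SOp n, IsHSAdjoint K Kstar →
      Function.Bijective Kstar ∧
      ∀ KstarInv : SOp n,
        (∀ O : Op n, Kstar (KstarInv O) = O) →
        (∀ O : Op n, KstarInv (Kstar O) = O) →
        (∀ α : Fin n → Fin 4, α ≠ 0 →
            KstarInv (Qdual lam α) = ((∑ i ∈ suppStr α, q i)⁻¹ : ℝ) • Qdual lam α) ∧
        KstarInv (Qdual lam 0) = Qdual lam 0 := by
  have hc := kEigenvalue_ne_zero hq0
  have hKQ (α : Fin n → Fin 4) : K (Qmat lam α) = kEigenvalue q α • Qmat lam α := by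
    rw [← kMap_Qmat lam hqsum, hK, hE0, kMap]
    simp only [hD]
    rfl
  refine ⟨fun α hα => by rw [hKQ, kEigenvalue, if_neg hα],
    by rw [hKQ, kEigenvalue, if_pos rfl, one_smul],
    bijective_of_apply_basis_eq_smul (qmatBasis lam) K (fun α => kEigenvalue q α)
      (by exact_mod_cast hc) (by simpa [Complex.coe_smul] using hKQ),
    fun Kstar hKs => ?_⟩
  have hKsQ := hKs.apply_eq_smul_of_trace_mul_eq_ite (qmatBasis lam) (Qdual lam)
    (by simpa using trace_Qdual_mul_Qmat lam) (conjTranspose_Qdual lam) _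
    (by simpa using hKQ)
  refine ⟨bijective_of_apply_basis_eq_smul (qdualBasis lam) Kstar (fun α => kEigenvalue q α)
      (by exact_mod_cast hc) (by simpa [Complex.coe_smul] using hKsQ),
    fun KstarInv _ hinv => ?_⟩
  have hinvQ (α : Fin n → Fin 4) :
      KstarInv (Qdual lam α) = (kEigenvalue q α)⁻¹ • Qdual lam α := by
    rw [← hinv ((kEigenvalue q α)⁻¹ • Qdual lam α), LinearMap.map_smul_of_tower, hKsQ,
      inv_smul_smul₀ (hc α)]
  exact ⟨fun α hα => by rw [hinvQ, kEigenvalue, if_neg hα],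
    by rw [hinvQ, kEigenvalue, if_pos rfl, inv_one, one_smul]⟩

/-- the map `K(ρ) = ρ - E₀(ρ) + Tr(ρ)·ρ₀` is diagonal in the
Wauli basis with eigenvalues `q_α` (and `1` on `Q_{(0,…,0)}`); it is
invertible, its Hilbert–Schmidt adjoint is invertible, and the inverse of the
adjoint is diagonal in the dual Wauli basis with eigenvalues `1/q_α`. -/
theorem K_diagonal_and_invertible {n : ℕ} (lam : Fin n → ℝ)
    (hlam : ∀ i, 0 ≤ lam i ∧ lam i < 1)
    (q : Fin n → ℝ) (hq0 : ∀ i, 0 < q i) (hqsum : ∑ i, q i = 1)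
    (D : Fin n → SOp n)
    (hD : ∀ i (ρ : Op n), D i ρ = Matrix.of fun x y =>
      (∑ b : Fin 2, ρ (Function.update x i b) (Function.update y i b)) *
        Wmat (lam i) (x i) (y i))
    (E0 : SOp n) (hE0 : ∀ ρ : Op n, E0 ρ = ∑ i, q i • D i ρ)
    (K : SOp n)
    (hK : ∀ ρ : Op n, K ρ = ρ - E0 ρ + ρ.trace • Qmat lam 0) :
    (∀ α : Fin n → Fin 4, α ≠ 0 →
        K (Qmat lam α) = (∑ i ∈ suppStr α, q i : ℝ) • Qmat lam α) ∧
    K (Qmat lam 0) = Qmat lam 0 ∧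
    Function.Bijective K ∧
    ∀ Kstar : SOp n, IsHSAdjoint K Kstar →
      Function.Bijective Kstar ∧
      ∀ KstarInv : SOp n,
        (∀ O : Op n, Kstar (KstarInv O) = O) →
        (∀ O : Op n, KstarInv (Kstar O) = O) →
        (∀ α : Fin n → Fin 4, α ≠ 0 →
            KstarInv (Qdual lam α) = ((∑ i ∈ suppStr α, q i)⁻¹ : ℝ) • Qdual lam α) ∧
        KstarInv (Qdual lam 0) = Qdual lam 0 :=
  K_diagonal_and_invertible_general lam q hq0 hqsum D hD E0 hE0 K hK

end

end SSP
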